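/- Let G be a bipartite graph with parts V (variable nodes) and C (constraint nodes) in which every variable node has degree exactly d ≥ 2, and suppose the girth of G is at least g, where g is even and g ≥ 6. Let x : V → ℝ be nonnegative and suppose that for every constraint node c ∈ C and every variable node v adjacent to c, one has x_v ≤ Σ_{w adjacent to c, w ≠ v} x_w. Then for every v₀ ∈ V, T(d,g) · x_{v₀} ≤ Σ_{v ∈ V} x_v. -/

import Mathlib

/-!
Grow the breadth-first tree of `bip adj` from `v₀`: layer `k` consists of the variable nodes
at distance `2k` and the constraint nodes at distance `2k + 1`. Within distance `g / 2` of `v₀`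
the girth bound makes the ball a tree: a node has at most one neighbour closer to `v₀`, and by
bipartiteness all its other neighbours are one step farther. So a variable node of layer `k`
has at least `d - 1` child constraints (all `d` if it is `v₀`), distinct nodes have disjoint
children, and the constraint inequality at each child constraint bounds the value of its
parent by the sum over that constraint's children. This gives `S 1 ≥ d S 0` and
`S (k + 1) ≥ (d - 1) S k` for the layer sums `S k`; when `g ≡ 0 (mod 4)` the nodes of the
outermost variable layer may have up to `d` parents, which only gives
`d S (k + 1) ≥ (d - 1) S k`. The layers are disjoint, so
`T(d,g) x v₀ ≤ ∑ k, S k ≤ ∑ v, x v`.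
-/

open scoped Classical

/-- The simple graph on the disjoint union `V ⊕ C` associated to a bipartite adjacency
relation between variable nodes `V` and constraint nodes `C`. -/
def bip {V C : Type*} (adj : V → C → Prop) : SimpleGraph (V ⊕ C) where
  Adj x y :=
    (∃ v c, x = Sum.inl v ∧ y = Sum.inr c ∧ adj v c) ∨
    (∃ v c, x = Sum.inr c ∧ y = Sum.inl v ∧ adj v c)
  symm := by
    constructor
    rintro x y (⟨v, c, hx, hy, h⟩ | ⟨v, c, hx, hy, h⟩)
    · exact Or.inr ⟨v, c, hy, hx, h⟩
    · exact Or.inl ⟨v, c, hy, hx, h⟩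
  loopless := by
    constructor
    rintro x (⟨v, c, hx, hy, h⟩ | ⟨v, c, hx, hy, h⟩) <;> subst hx <;> simp at hy

/-- The tree bound `T(d,g)` for `d ≥ 2` and even girth `g ≥ 6`:
`T(d,g) = 1 + d + d(d−1) + … + d(d−1)^{(g−6)/4}` when `g ≡ 2 (mod 4)`, and
`T(d,g) = 1 + d + d(d−1) + … + d(d−1)^{(g−8)/4} + (d−1)^{(g−4)/4}` when `g ≡ 0 (mod 4)`. -/
def treeBound (d g : ℕ) : ℕ :=
  if g % 4 = 2 then
    1 + d * ∑ k ∈ Finset.range ((g - 6) / 4 + 1), (d - 1) ^ k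
  else
    1 + d * ∑ k ∈ Finset.range ((g - 8) / 4 + 1), (d - 1) ^ k + (d - 1) ^ ((g - 4) / 4)

open Finset

namespace SimpleGraph

variable {α : Type*} {G : SimpleGraph α} {o u w p q : α}

-- Shortest walks from `o` to `u` through `p` and through `q` would be distinct paths closing a
-- cycle of length at most `2 * G.dist o u`.
theorem eq_of_adj_of_dist_add_one_eq (hu : (2 * G.dist o u : ℕ) < G.egirth)
    (hp : G.Adj u p) (hq : G.Adj u q)
    (hdp : G.dist o p + 1 = G.dist o u) (hdq : G.dist o q + 1 = G.dist o u) : p = q := by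
  by_contra hne
  have hru : G.Reachable o u := Reachable.of_dist_ne_zero (by omega)
  obtain ⟨P, -, hP⟩ := (hru.trans hp.reachable).exists_path_of_dist
  obtain ⟨Q, -, hQ⟩ := (hru.trans hq.reachable).exists_path_of_dist
  have hPu : (P.concat hp.symm).length = G.dist o u := by rw [Walk.length_concat]; omega
  have hQu : (Q.concat hq.symm).length = G.dist o u := by rw [Walk.length_concat]; omega
  have hPQ : P.concat hp.symm ≠ Q.concat hq.symm := fun h => hne (Walk.concat_inj h).1
  obtain ⟨_, -, -, c, hc, hlen⟩ :=
    (P.concat hp.symm).isPath_of_length_eq_dist hPu |>.exists_isCycle_length_le_add_of_ne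
      ((Q.concat hq.symm).isPath_of_length_eq_dist hQu) hPQ
  have := hu.trans_le (egirth_le_length hc)
  norm_cast at this
  omega

theorem Coloring.dist_eq_add_one_or_of_adj (c : G.Coloring Bool) (hr : G.Reachable o u)
    (h : G.Adj u w) : G.dist o w = G.dist o u + 1 ∨ G.dist o u = G.dist o w + 1 := by
  obtain ⟨P, hP⟩ := hr.exists_walk_length_eq_dist
  obtain ⟨Q, hQ⟩ := (hr.trans h.reachable).exists_walk_length_eq_dist
  have hparity : Even (G.dist o u) ↔ ¬ Even (G.dist o w) := by
    rw [← hP, ← hQ, c.even_length_iff_congr, c.even_length_iff_congr]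
    have := c.valid h
    revert this
    cases c u <;> cases c w <;> simp
  simp only [Nat.even_iff] at hparity
  rcases h.diff_dist_adj (u := o) with h' | h' | h' <;> omega

end SimpleGraph

theorem Finset.sum_sum_bipartiteBelow_le_nsmul {α β R : Type*} [AddCommMonoid R] [PartialOrder R]
    [IsOrderedAddMonoid R] {r : α → β → Prop} [∀ a b, Decidable (r a b)] {s : Finset α}
    {t : Finset β} {f : α → R} (hf : ∀ a ∈ s, 0 ≤ f a) {m : ℕ}
    (hm : ∀ a ∈ s, #(t.bipartiteAbove r a) ≤ m) :
    ∑ b ∈ t, ∑ a ∈ s.bipartiteBelow r b, f a ≤ m • ∑ a ∈ s, f a := by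
  rw [← sum_sum_bipartiteAbove_eq_sum_sum_bipartiteBelow r fun a _ => f a, smul_sum]
  refine sum_le_sum fun a ha => ?_
  rw [sum_const]
  exact nsmul_le_nsmul_left (hf a ha) (hm a ha)

section Layers

open SimpleGraph

variable {V C : Type*} {adj : V → C → Prop}

@[simp]
theorem bip_adj_inl_inr {v : V} {c : C} : (bip adj).Adj (.inl v) (.inr c) ↔ adj v c := by
  simp [bip]

@[simp]
theorem bip_adj_inr_inl {v : V} {c : C} : (bip adj).Adj (.inr c) (.inl v) ↔ adj v c := by
  simp [bip]

variable (adj) in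
def bipColoring : (bip adj).Coloring Bool :=
  Coloring.mk Sum.isLeft (by rintro (v | c) (w | c') h <;> simp_all [bip])

variable [Fintype V] [Fintype C]

-- The reachability conjunct keeps out unreachable nodes, whose `dist` is the junk value `0`.
variable (adj) in
noncomputable def varLayer (v₀ : V) (k : ℕ) : Finset V :=
  {v | (bip adj).Reachable (.inl v₀) (.inl v) ∧ (bip adj).dist (.inl v₀) (.inl v) = 2 * k}

variable (adj) in
noncomputable def conLayer (v₀ : V) (k : ℕ) : Finset C :=
  {c | (bip adj).Reachable (.inl v₀) (.inr c) ∧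
    (bip adj).dist (.inl v₀) (.inr c) = 2 * k + 1}

variable {v₀ v w : V} {c : C} {k : ℕ}

@[simp]
theorem mem_varLayer : v ∈ varLayer adj v₀ k ↔
    (bip adj).Reachable (.inl v₀) (.inl v) ∧ (bip adj).dist (.inl v₀) (.inl v) = 2 * k := by
  simp [varLayer]

@[simp]
theorem mem_conLayer : c ∈ conLayer adj v₀ k ↔
    (bip adj).Reachable (.inl v₀) (.inr c) ∧
      (bip adj).dist (.inl v₀) (.inr c) = 2 * k + 1 := by
  simp [conLayer]

theorem varLayer_zero : varLayer adj v₀ 0 = {v₀} := by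
  ext v
  simp only [mem_varLayer, mul_zero, mem_singleton]
  constructor
  · rintro ⟨hr, hd⟩
    simpa using (hr.dist_eq_zero_iff.mp hd).symm
  · rintro rfl
    simp

theorem conLayer_zero_bipartiteAbove : (conLayer adj v₀ 0).bipartiteAbove adj v₀ =
    ({c | adj v₀ c} : Finset C) := by
  ext c
  simp only [mem_bipartiteAbove, mem_conLayer, mul_zero, zero_add, dist_eq_one_iff_adj,
    bip_adj_inl_inr, mem_filter, mem_univ, true_and, and_iff_right_iff_imp]
  exact fun h => ⟨(bip_adj_inl_inr.mpr h).reachable, h⟩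

theorem mem_varLayer_succ_of_adj (hg : ((4 * k + 2 : ℕ) : ℕ∞) < (bip adj).egirth)
    (hv : v ∈ varLayer adj v₀ k) (hc : c ∈ conLayer adj v₀ k) (hvc : adj v c)
    (hwc : adj w c) (hwv : w ≠ v) : w ∈ varLayer adj v₀ (k + 1) := by
  rw [mem_varLayer] at hv ⊢
  rw [mem_conLayer] at hc
  have hadj : (bip adj).Adj (.inr c) (.inl w) := bip_adj_inr_inl.mpr hwc
  refine ⟨hc.1.trans hadj.reachable, ?_⟩
  rcases (bipColoring adj).dist_eq_add_one_or_of_adj hc.1 hadj with h | h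
  · omega
  · refine absurd (Sum.inl_injective (eq_of_adj_of_dist_add_one_eq (o := .inl v₀) ?_ hadj
      (bip_adj_inr_inl.mpr hvc) (by omega) (by omega))) hwv
    rwa [hc.2, show 2 * (2 * k + 1) = 4 * k + 2 by ring]

theorem card_bipartiteBelow_varLayer_le_one (hg : ((4 * k + 2 : ℕ) : ℕ∞) < (bip adj).egirth)
    (hc : c ∈ conLayer adj v₀ k) : #((varLayer adj v₀ k).bipartiteBelow adj c) ≤ 1 := by
  refine card_le_one.mpr fun v hv v' hv' => ?_
  simp only [mem_bipartiteBelow, mem_varLayer] at hv hv'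
  rw [mem_conLayer] at hc
  refine Sum.inl_injective (eq_of_adj_of_dist_add_one_eq (o := .inl v₀) (u := .inr c) ?_
    (bip_adj_inr_inl.mpr hv.2) (bip_adj_inr_inl.mpr hv'.2) (by omega) (by omega))
  rwa [hc.2, show 2 * (2 * k + 1) = 4 * k + 2 by ring]

theorem card_bipartiteAbove_conLayer_le_one (hg : ((4 * k + 4 : ℕ) : ℕ∞) < (bip adj).egirth)
    (hw : w ∈ varLayer adj v₀ (k + 1)) :
    #((conLayer adj v₀ k).bipartiteAbove adj w) ≤ 1 := by
  refine card_le_one.mpr fun c hc c' hc' => ?_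
  simp only [mem_bipartiteAbove, mem_conLayer] at hc hc'
  rw [mem_varLayer] at hw
  refine Sum.inr_injective (eq_of_adj_of_dist_add_one_eq (o := .inl v₀) (u := .inl w) ?_
    (bip_adj_inl_inr.mpr hc.2) (bip_adj_inl_inr.mpr hc'.2) (by omega) (by omega))
  rwa [hw.2, show 2 * (2 * (k + 1)) = 4 * k + 4 by ring]

theorem card_filter_adj_le_card_bipartiteAbove_conLayer_add_one
    (hg : ((4 * k : ℕ) : ℕ∞) < (bip adj).egirth) (hv : v ∈ varLayer adj v₀ k) :
    #({c | adj v c} : Finset C) ≤ #((conLayer adj v₀ k).bipartiteAbove adj v) + 1 := by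
  rw [mem_varLayer] at hv
  set parents : Finset C := {c | adj v c ∧
    (bip adj).dist (.inl v₀) (.inr c) + 1 = (bip adj).dist (.inl v₀) (.inl v)}
  have hsub : ({c | adj v c} : Finset C) ⊆
      (conLayer adj v₀ k).bipartiteAbove adj v ∪ parents := by
    intro c hc
    rw [mem_filter] at hc
    have hadj : (bip adj).Adj (.inl v) (.inr c) := bip_adj_inl_inr.mpr hc.2
    rcases (bipColoring adj).dist_eq_add_one_or_of_adj hv.1 hadj with h | h
    · exact mem_union_left _ ((mem_bipartiteAbove adj).mpr
        ⟨mem_conLayer.mpr ⟨hv.1.trans hadj.reachable, by omega⟩, hc.2⟩)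
    · exact mem_union_right _ (mem_filter.mpr ⟨mem_univ c, hc.2, h.symm⟩)
  have hparents : #parents ≤ 1 := by
    refine card_le_one.mpr fun c hc c' hc' => ?_
    simp only [parents, mem_filter, mem_univ, true_and] at hc hc'
    refine Sum.inr_injective (eq_of_adj_of_dist_add_one_eq (o := .inl v₀) (u := .inl v) ?_
      (bip_adj_inl_inr.mpr hc.1) (bip_adj_inl_inr.mpr hc'.1) hc.2 hc'.2)
    rwa [hv.2, show 2 * (2 * k) = 4 * k by ring]
  calc #({c | adj v c} : Finset C)
      ≤ #((conLayer adj v₀ k).bipartiteAbove adj v ∪ parents) := card_le_card hsub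
    _ ≤ #((conLayer adj v₀ k).bipartiteAbove adj v) + #parents := card_union_le _ _
    _ ≤ _ := by omega

theorem nsmul_sum_varLayer_le {R : Type*} [AddCommMonoid R] [PartialOrder R]
    [IsOrderedAddMonoid R] {x : V → R} (hx : ∀ v, 0 ≤ x v)
    (hcons : ∀ c v, adj v c → x v ≤ ∑ w ∈ {w | adj w c ∧ w ≠ v}, x w)
    (hg : ((4 * k + 2 : ℕ) : ℕ∞) < (bip adj).egirth) {m M : ℕ}
    (hm : ∀ v ∈ varLayer adj v₀ k, m ≤ #((conLayer adj v₀ k).bipartiteAbove adj v))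
    (hM : ∀ w ∈ varLayer adj v₀ (k + 1),
      #((conLayer adj v₀ k).bipartiteAbove adj w) ≤ M) :
    m • ∑ v ∈ varLayer adj v₀ k, x v ≤
      M • ∑ v ∈ varLayer adj v₀ (k + 1), x v := by
  set Y : C → R := fun c => ∑ w ∈ (varLayer adj v₀ (k + 1)).bipartiteBelow adj c, x w
  calc m • ∑ v ∈ varLayer adj v₀ k, x v
      ≤ ∑ v ∈ varLayer adj v₀ k,
          ∑ _c ∈ (conLayer adj v₀ k).bipartiteAbove adj v, x v := by
        rw [smul_sum]
        refine sum_le_sum fun v hv => ?_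
        rw [sum_const]
        exact nsmul_le_nsmul_left (hx v) (hm v hv)
    _ ≤ ∑ v ∈ varLayer adj v₀ k,
          ∑ c ∈ (conLayer adj v₀ k).bipartiteAbove adj v, Y c := by
        refine sum_le_sum fun v hv => sum_le_sum fun c hc => ?_
        rw [mem_bipartiteAbove] at hc
        refine (hcons c v hc.2).trans (sum_le_sum_of_subset_of_nonneg (fun w hw => ?_)
          fun w _ _ => hx w)
        rw [mem_filter] at hw
        exact (mem_bipartiteBelow adj).mpr
          ⟨mem_varLayer_succ_of_adj hg hv hc.1 hc.2 hw.2.1 hw.2.2, hw.2.1⟩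
    _ ≤ 1 • ∑ c ∈ conLayer adj v₀ k, Y c :=
        sum_sum_bipartiteBelow_le_nsmul (r := Function.swap adj)
          (fun c _ => sum_nonneg fun w _ => hx w)
          fun c hc => card_bipartiteBelow_varLayer_le_one hg hc
    _ ≤ M • ∑ v ∈ varLayer adj v₀ (k + 1), x v := by
        rw [one_smul]
        exact sum_sum_bipartiteBelow_le_nsmul (fun w _ => hx w) hM

theorem sum_range_sum_varLayer_le {R : Type*} [AddCommMonoid R] [PartialOrder R]
    [IsOrderedAddMonoid R] {x : V → R} (hx : ∀ v, 0 ≤ x v) (n : ℕ) :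
    ∑ k ∈ range n, ∑ v ∈ varLayer adj v₀ k, x v ≤ ∑ v, x v := by
  rw [← sum_biUnion]
  · exact sum_le_sum_of_subset_of_nonneg (subset_univ _) fun v _ _ => hx v
  · intro j _ k _ hjk
    exact disjoint_left.mpr fun v hj hk => hjk (by rw [mem_varLayer] at hj hk; omega)

end Layers

section TreeBound

variable {R : Type*} [CommSemiring R] [PartialOrder R] [IsOrderedRing R] {S : ℕ → R} {a b : R}
  {n : ℕ}

theorem mul_pow_mul_le_of_mul_le_succ (hb : 0 ≤ b) (h₀ : a * S 0 ≤ S 1)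
    (hstep : ∀ k, 1 ≤ k → k < n → b * S k ≤ S (k + 1)) :
    ∀ j < n, a * b ^ j * S 0 ≤ S (j + 1)
  | 0, _ => by simpa using h₀
  | j + 1, hj =>
    calc a * b ^ (j + 1) * S 0 = b * (a * b ^ j * S 0) := by ring
      _ ≤ b * S (j + 1) :=
        mul_le_mul_of_nonneg_left (mul_pow_mul_le_of_mul_le_succ hb h₀ hstep j (by omega)) hb
      _ ≤ S (j + 2) := hstep _ (by omega) hj

theorem one_add_mul_sum_pow_mul_le_sum (hb : 0 ≤ b) (h₀ : a * S 0 ≤ S 1)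
    (hstep : ∀ k, 1 ≤ k → k < n → b * S k ≤ S (k + 1)) :
    (1 + a * ∑ j ∈ range n, b ^ j) * S 0 ≤ ∑ k ∈ range (n + 1), S k := by
  rw [sum_range_succ', add_comm, add_mul, one_mul, mul_sum, sum_mul]
  gcongr with j hj
  exact mul_pow_mul_le_of_mul_le_succ hb h₀ hstep j (mem_range.mp hj)

end TreeBound

theorem treeBound_mul_le_sum {d g : ℕ} (hd : 0 < d) (hg6 : 6 ≤ g) (hge : Even g)
    {S : ℕ → ℝ} (h₀ : d * S 0 ≤ S 1)
    (hfull : ∀ k, 1 ≤ k → 4 * k + 6 ≤ g → ((d - 1 : ℕ) : ℝ) * S k ≤ S (k + 1))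
    (hlast : ∀ k, 1 ≤ k → 4 * k + 4 ≤ g → ((d - 1 : ℕ) : ℝ) * S k ≤ d * S (k + 1)) :
    treeBound d g * S 0 ≤ ∑ k ∈ range (g / 4 + 1), S k := by
  have hb : (0 : ℝ) ≤ ((d - 1 : ℕ) : ℝ) := Nat.cast_nonneg _
  rw [Nat.even_iff] at hge
  rcases (by omega : g % 4 = 2 ∨ g % 4 = 0) with hg | hg
  · obtain ⟨n, rfl⟩ : ∃ n, g = 4 * n + 6 := ⟨g / 4 - 1, by omega⟩
    have hTB : (treeBound d (4 * n + 6) : ℝ) =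
        1 + d * ∑ j ∈ range (n + 1), ((d - 1 : ℕ) : ℝ) ^ j := by
      rw [treeBound, if_pos hg, show (4 * n + 6 - 6) / 4 = n by omega]
      push_cast
      rfl
    rw [hTB, show (4 * n + 6) / 4 + 1 = n + 1 + 1 by omega]
    exact one_add_mul_sum_pow_mul_le_sum hb h₀ fun k hk1 hk => hfull k hk1 (by omega)
  · obtain ⟨n, rfl⟩ : ∃ n, g = 4 * n + 8 := ⟨g / 4 - 2, by omega⟩
    have hTB : (treeBound d (4 * n + 8) : ℝ) =
        (1 + d * ∑ j ∈ range (n + 1), ((d - 1 : ℕ) : ℝ) ^ j) +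
          ((d - 1 : ℕ) : ℝ) ^ (n + 1) := by
      rw [treeBound, if_neg (by omega), show (4 * n + 8 - 8) / 4 = n by omega,
        show (4 * n + 8 - 4) / 4 = n + 1 by omega]
      push_cast
      rfl
    have hstep : ∀ k, 1 ≤ k → k < n + 1 → ((d - 1 : ℕ) : ℝ) * S k ≤ S (k + 1) :=
      fun k hk1 hk => hfull k hk1 (by omega)
    have hlevel : ((d - 1 : ℕ) : ℝ) ^ (n + 1) * S 0 ≤ S (n + 2) := by
      refine le_of_mul_le_mul_left ?_ (Nat.cast_pos.mpr hd : (0 : ℝ) < d)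
      calc (d : ℝ) * (((d - 1 : ℕ) : ℝ) ^ (n + 1) * S 0)
          = ((d - 1 : ℕ) : ℝ) * (d * ((d - 1 : ℕ) : ℝ) ^ n * S 0) := by ring
        _ ≤ ((d - 1 : ℕ) : ℝ) * S (n + 1) :=
          mul_le_mul_of_nonneg_left (mul_pow_mul_le_of_mul_le_succ hb h₀ hstep n (by omega)) hb
        _ ≤ d * S (n + 2) := hlast (n + 1) (by omega) (by omega)
    rw [hTB, add_mul, show (4 * n + 8) / 4 + 1 = n + 1 + 1 + 1 by omega,
      sum_range_succ _ (n + 2)]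
    exact add_le_add (one_add_mul_sum_pow_mul_le_sum hb h₀ hstep) hlevel

theorem stmt_18 (V C : Type*) [Fintype V] [Fintype C] (adj : V → C → Prop)
    (d g : ℕ) (hd : 2 ≤ d) (hg6 : 6 ≤ g) (hge : Even g)
    -- every variable node has degree exactly d
    (hdeg : ∀ v : V, Nat.card {c : C // adj v c} = d)
    -- the girth of the bipartite graph is at least g
    (hgirth : (g : ℕ∞) ≤ (bip adj).egirth)
    (x : V → ℝ) (hx : ∀ v, 0 ≤ x v)
    -- at every constraint node, each neighbour's value is at most the sum of the others
    (hcons : ∀ c : C, ∀ v : V, adj v c →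
      x v ≤ ∑ w ∈ Finset.univ.filter (fun w => adj w c ∧ w ≠ v), x w) :
    ∀ v₀ : V, (treeBound d g : ℝ) * x v₀ ≤ ∑ v : V, x v := by
  intro v₀
  have hdegF : ∀ v, #({c | adj v c} : Finset C) = d := fun v => by
    rw [← hdeg v, Nat.card_eq_fintype_card, Fintype.card_subtype]
  have hlt : ∀ n, n < g → (n : ℕ∞) < (bip adj).egirth :=
    fun n hn => (Nat.cast_lt.mpr hn).trans_le hgirth
  set S : ℕ → ℝ := fun k => ∑ v ∈ varLayer adj v₀ k, x v
  have hrec : ∀ k m M, 4 * k + 2 < g →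
      (∀ v ∈ varLayer adj v₀ k, m ≤ #((conLayer adj v₀ k).bipartiteAbove adj v)) →
      (∀ w ∈ varLayer adj v₀ (k + 1), #((conLayer adj v₀ k).bipartiteAbove adj w) ≤ M) →
      (m : ℝ) * S k ≤ M * S (k + 1) := fun k m M hk hm hM => by
    simpa only [nsmul_eq_mul] using nsmul_sum_varLayer_le hx hcons (hlt _ hk) hm hM
  have hchildren : ∀ k, 4 * k < g → ∀ v ∈ varLayer adj v₀ k,
      d - 1 ≤ #((conLayer adj v₀ k).bipartiteAbove adj v) := fun k hk v hv => by
    have := card_filter_adj_le_card_bipartiteAbove_conLayer_add_one (hlt _ hk) hv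
    rw [hdegF] at this
    omega
  have hparents_le_one : ∀ k, 4 * k + 4 < g → ∀ w ∈ varLayer adj v₀ (k + 1),
      #((conLayer adj v₀ k).bipartiteAbove adj w) ≤ 1 :=
    fun k hk w hw => card_bipartiteAbove_conLayer_le_one (hlt _ hk) hw
  have hparents_le_deg : ∀ k w, #((conLayer adj v₀ k).bipartiteAbove adj w) ≤ d :=
    fun k w => hdegF w ▸ card_le_card (filter_subset_filter _ (subset_univ _))
  calc (treeBound d g : ℝ) * x v₀ = treeBound d g * S 0 := by simp [S, varLayer_zero]
    _ ≤ ∑ k ∈ range (g / 4 + 1), S k := by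
      refine treeBound_mul_le_sum (by omega) hg6 hge ?_ (fun k _ hk => ?_) (fun k _ hk => ?_)
      · simpa only [Nat.cast_one, one_mul] using hrec 0 d 1 (by omega)
          (by simp [varLayer_zero, conLayer_zero_bipartiteAbove, hdegF])
          (hparents_le_one 0 (by omega))
      · simpa only [Nat.cast_one, one_mul] using
          hrec k _ 1 (by omega) (hchildren k (by omega)) (hparents_le_one k (by omega))
      · exact hrec k _ d (by omega) (hchildren k (by omega)) fun w _ => hparents_le_deg k w
    _ ≤ ∑ v, x v := sum_range_sum_varLayer_le hx _
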